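/- Let 0 → X →f Y →g Z → 0 and 0 → U →u V →v Z → 0 be short exact sequences of finitely generated right A-modules, and let α : Y → V be a homomorphism with g = v ∘ α. Then there exists a homomorphism β : X → U such that the sequence 0 → X → U ⊕ Y → V → 0 is exact, where the first map sends x to (β(x), f(x)) and the second map sends (w, y) to u(w) + α(y). Moreover, if both given short exact sequences are perfect exact, then so is this new sequence. -/

import Mathlib

/-- `0 → X → Y → Z → 0` is a short exact sequence of right `A`-modules
(right `A`-modules are modules over `Aᵐᵒᵖ`). -/
def IsShortExactSeq (A : Type) [Ring A] {X Y Z : Type}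
    [AddCommGroup X] [AddCommGroup Y] [AddCommGroup Z]
    [Module Aᵐᵒᵖ X] [Module Aᵐᵒᵖ Y] [Module Aᵐᵒᵖ Z]
    (f : X →ₗ[Aᵐᵒᵖ] Y) (g : Y →ₗ[Aᵐᵒᵖ] Z) : Prop :=
  Function.Injective f ∧ Function.Exact f g ∧ Function.Surjective g

/-- A short exact sequence `0 → X → Y → Z → 0` of right `A`-modules is perfect exact
if the induced sequence `0 → Hom_A(Z,A) → Hom_A(Y,A) → Hom_A(X,A) → 0` is exact. -/
def IsPerfectExactSeq (A : Type) [Ring A] {X Y Z : Type}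
    [AddCommGroup X] [AddCommGroup Y] [AddCommGroup Z]
    [Module Aᵐᵒᵖ X] [Module Aᵐᵒᵖ Y] [Module Aᵐᵒᵖ Z]
    (f : X →ₗ[Aᵐᵒᵖ] Y) (g : Y →ₗ[Aᵐᵒᵖ] Z) : Prop :=
  IsShortExactSeq A f g ∧
  Function.Injective (fun φ : Z →ₗ[Aᵐᵒᵖ] A => φ.comp g) ∧
  Function.Exact (fun φ : Z →ₗ[Aᵐᵒᵖ] A => φ.comp g) (fun φ : Y →ₗ[Aᵐᵒᵖ] A => φ.comp f) ∧
  Function.Surjective (fun φ : Y →ₗ[Aᵐᵒᵖ] A => φ.comp f)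

/-!
Since `v ∘ α ∘ f = g ∘ f = 0`, the map `-α ∘ f` lands in `ker v = range u` and lifts along the
injection `u` to `β : X → U`; a diagram chase then shows that `0 → X → U × Y → V → 0` is short
exact. Because `Hom(-, A)` is left exact, perfect exactness only adds surjectivity of restriction
to `X`, and a form `φ ∘ f` on `X` is the restriction of `(w, y) ↦ φ y` on `U × Y`.
-/

open LinearMap

section Modules

variable {R : Type*} [Ring R] {X Y Z U V N : Type*}
  [AddCommGroup X] [AddCommGroup Y] [AddCommGroup Z] [AddCommGroup U] [AddCommGroup V]
  [AddCommGroup N] [Module R X] [Module R Y] [Module R Z] [Module R U] [Module R V] [Module R N]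

theorem exists_comp_eq_of_exact {u : U →ₗ[R] V} {v : V →ₗ[R] Z} (hu : Function.Injective u)
    (huv : Function.Exact u v) (h : X →ₗ[R] V) (hvh : v ∘ₗ h = 0) :
    ∃ β : X →ₗ[R] U, u ∘ₗ β = h := by
  have hmem (x : X) : h x ∈ range u := (huv (h x)).mp (LinearMap.congr_fun hvh x)
  refine ⟨(LinearEquiv.ofInjective u hu).symm.toLinearMap ∘ₗ codRestrict (range u) h hmem, ?_⟩
  ext x
  exact LinearEquiv.ofInjective_symm_apply (h := hu) (x := ⟨h x, hmem x⟩)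

theorem exact_precomp_of_exact_of_surjective {f : X →ₗ[R] Y} {g : Y →ₗ[R] Z}
    (hfg : Function.Exact f g) (hg : Function.Surjective g) :
    Function.Exact (fun φ : Z →ₗ[R] N => φ ∘ₗ g) (fun φ : Y →ₗ[R] N => φ ∘ₗ f) := by
  intro ψ
  refine ⟨fun hψ => ?_, ?_⟩
  · refine ⟨(range f).liftQ ψ (range_le_ker_iff.mpr hψ) ∘ₗ
      (hfg.linearEquivOfSurjective hg).symm.toLinearMap, ?_⟩
    ext y
    simp
  · rintro ⟨φ, rfl⟩
    dsimp only
    rw [comp_assoc, hfg.linearMap_comp_eq_zero, comp_zero]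

variable {f : X →ₗ[R] Y} {g : Y →ₗ[R] Z} {u : U →ₗ[R] V} {v : V →ₗ[R] Z}
  {α : Y →ₗ[R] V} {β : X →ₗ[R] U}

theorem injective_prod_of_injective_right (hf : Function.Injective f) :
    Function.Injective (β.prod f) :=
  fun _ _ h => hf (congrArg Prod.snd h)

theorem exact_prod_coprod (hfg : Function.Exact f g) (hu : Function.Injective u)
    (hvu : v ∘ₗ u = 0) (hα : v ∘ₗ α = g) (hβ : u ∘ₗ β = -(α ∘ₗ f)) :
    Function.Exact (β.prod f) (u.coprod α) := by
  have huβ (x : X) : u (β x) = -α (f x) := LinearMap.congr_fun hβ x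
  rintro ⟨w, y⟩
  simp only [coprod_apply, Set.mem_range, prod_apply, Function.prod, Prod.mk.injEq]
  constructor
  · intro hwy
    have hgy : g y = 0 := by
      rw [← hα, comp_apply, eq_neg_of_add_eq_zero_right hwy, map_neg, ← comp_apply v u, hvu,
        LinearMap.zero_apply, neg_zero]
    obtain ⟨x, rfl⟩ := (hfg y).mp hgy
    refine ⟨x, hu ?_, rfl⟩
    rw [huβ, eq_neg_of_add_eq_zero_left hwy]
  · rintro ⟨x, rfl, rfl⟩
    rw [huβ, neg_add_cancel]

theorem surjective_coprod (huv : Function.Exact u v) (hg : Function.Surjective g)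
    (hα : v ∘ₗ α = g) : Function.Surjective (u.coprod α) := by
  intro p
  obtain ⟨y, hy⟩ := hg (v p)
  have hker : v (p - α y) = 0 := by
    rw [map_sub, ← comp_apply v α, hα, hy, sub_self]
  obtain ⟨w, hw⟩ := (huv _).mp hker
  exact ⟨(w, y), by simp [hw]⟩

theorem surjective_precomp_prod (hf : Function.Surjective fun φ : Y →ₗ[R] N => φ ∘ₗ f) :
    Function.Surjective fun φ : U × Y →ₗ[R] N => φ ∘ₗ β.prod f := by
  intro χ
  obtain ⟨φ, rfl⟩ := hf χ
  exact ⟨coprod 0 φ, by ext; simp⟩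

end Modules

section ShortExactSeq

variable {A : Type} [Ring A] {X Y Z U V : Type}
  [AddCommGroup X] [AddCommGroup Y] [AddCommGroup Z] [AddCommGroup U] [AddCommGroup V]
  [Module Aᵐᵒᵖ X] [Module Aᵐᵒᵖ Y] [Module Aᵐᵒᵖ Z] [Module Aᵐᵒᵖ U] [Module Aᵐᵒᵖ V]

theorem isPerfectExactSeq_iff {f : X →ₗ[Aᵐᵒᵖ] Y} {g : Y →ₗ[Aᵐᵒᵖ] Z} :
    IsPerfectExactSeq A f g ↔
      IsShortExactSeq A f g ∧ Function.Surjective fun φ : Y →ₗ[Aᵐᵒᵖ] A => φ ∘ₗ f := by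
  refine ⟨fun h => ⟨h.1, h.2.2.2⟩, fun ⟨hfg, hsurj⟩ => ⟨hfg, ?_, ?_, hsurj⟩⟩
  · exact fun _ _ h => (cancel_right hfg.2.2).mp h
  · exact exact_precomp_of_exact_of_surjective hfg.2.1 hfg.2.2

theorem IsShortExactSeq.prod_coprod {f : X →ₗ[Aᵐᵒᵖ] Y} {g : Y →ₗ[Aᵐᵒᵖ] Z}
    {u : U →ₗ[Aᵐᵒᵖ] V} {v : V →ₗ[Aᵐᵒᵖ] Z} {α : Y →ₗ[Aᵐᵒᵖ] V} {β : X →ₗ[Aᵐᵒᵖ] U}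
    (hfg : IsShortExactSeq A f g) (huv : IsShortExactSeq A u v)
    (hα : v ∘ₗ α = g) (hβ : u ∘ₗ β = -(α ∘ₗ f)) :
    IsShortExactSeq A (β.prod f) (u.coprod α) :=
  ⟨injective_prod_of_injective_right hfg.1,
    exact_prod_coprod hfg.2.1 huv.1 huv.2.1.linearMap_comp_eq_zero hα hβ,
    surjective_coprod huv.2.1 hfg.2.2 hα⟩

end ShortExactSeq

theorem perfectExactSeq_pullback_general
    (A : Type) [Ring A]
    (X Y Z U V : Type)
    [AddCommGroup X] [AddCommGroup Y] [AddCommGroup Z] [AddCommGroup U] [AddCommGroup V]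
    [Module Aᵐᵒᵖ X] [Module Aᵐᵒᵖ Y] [Module Aᵐᵒᵖ Z] [Module Aᵐᵒᵖ U] [Module Aᵐᵒᵖ V]
    (f : X →ₗ[Aᵐᵒᵖ] Y) (g : Y →ₗ[Aᵐᵒᵖ] Z) (u : U →ₗ[Aᵐᵒᵖ] V) (v : V →ₗ[Aᵐᵒᵖ] Z)
    (α : Y →ₗ[Aᵐᵒᵖ] V)
    (hfg : IsShortExactSeq A f g) (huv : IsShortExactSeq A u v)
    (hα : v.comp α = g) :
    ∃ β : X →ₗ[Aᵐᵒᵖ] U,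
      IsShortExactSeq A (β.prod f) (u.coprod α) ∧
      (IsPerfectExactSeq A f g → IsPerfectExactSeq A u v →
        IsPerfectExactSeq A (β.prod f) (u.coprod α)) := by
  have hvαf : v ∘ₗ (-(α ∘ₗ f)) = 0 := by
    rw [comp_neg, ← comp_assoc, hα, hfg.2.1.linearMap_comp_eq_zero, neg_zero]
  obtain ⟨β, hβ⟩ := exists_comp_eq_of_exact huv.1 huv.2.1 _ hvαf
  have hses := hfg.prod_coprod huv hα hβ
  refine ⟨β, hses, fun hperf _ => isPerfectExactSeq_iff.mpr ⟨hses, ?_⟩⟩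
  exact surjective_precomp_prod (isPerfectExactSeq_iff.mp hperf).2

/-- Pullback construction: given short exact sequences `0 → X →f Y →g Z → 0` and
`0 → U →u V →v Z → 0` of finitely generated right `A`-modules and `α : Y → V` with
`g = v ∘ α`, there is `β : X → U` such that
`0 → X → U ⊕ Y → V → 0`, with maps `x ↦ (β x, f x)` and `(w, y) ↦ u w + α y`,
is a short exact sequence; moreover if the two given sequences are perfect exact,
then so is the new one. -/
theorem perfectExactSeq_pullback
    (k A : Type) [Field k] [Ring A] [Algebra k A] [FiniteDimensional k A]
    (X Y Z U V : Type)
    [AddCommGroup X] [AddCommGroup Y] [AddCommGroup Z] [AddCommGroup U] [AddCommGroup V]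
    [Module Aᵐᵒᵖ X] [Module Aᵐᵒᵖ Y] [Module Aᵐᵒᵖ Z] [Module Aᵐᵒᵖ U] [Module Aᵐᵒᵖ V]
    [Module.Finite Aᵐᵒᵖ X] [Module.Finite Aᵐᵒᵖ Y] [Module.Finite Aᵐᵒᵖ Z]
    [Module.Finite Aᵐᵒᵖ U] [Module.Finite Aᵐᵒᵖ V]
    (f : X →ₗ[Aᵐᵒᵖ] Y) (g : Y →ₗ[Aᵐᵒᵖ] Z) (u : U →ₗ[Aᵐᵒᵖ] V) (v : V →ₗ[Aᵐᵒᵖ] Z)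
    (α : Y →ₗ[Aᵐᵒᵖ] V)
    (hfg : IsShortExactSeq A f g) (huv : IsShortExactSeq A u v)
    (hα : v.comp α = g) :
    ∃ β : X →ₗ[Aᵐᵒᵖ] U,
      IsShortExactSeq A (β.prod f) (u.coprod α) ∧
      (IsPerfectExactSeq A f g → IsPerfectExactSeq A u v →
        IsPerfectExactSeq A (β.prod f) (u.coprod α)) :=
  perfectExactSeq_pullback_general A X Y Z U V f g u v α hfg huv hα
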